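/- arXiv:2307.13750 — 3 statements merged into one kernel-verified Lean document; each statement's English description precedes it below -/
import Mathlib

section
/- Let {θ̂_t}_{t=0}^T and {θ*_t}_{t=0}^T be sequences of real numbers with supp(θ*) ⊆ supp(θ̂) coordinatewise in time. Suppose (1−γ) Σ_{t=0}^T 𝟙[θ̂_t ≠ 0] + γ Σ_{t=1}^T |θ̂_t − θ̂_{t−1}|^q ≤ (1−γ) Σ_{t=0}^T 𝟙[θ*_t ≠ 0] + γ Σ_{t=1}^T |θ*_t − θ*_{t−1}|^q, that Σ_{t=1}^T |θ*_t − θ*_{t−1}|^q ≤ D, and that 0 < γ < 1/(1+D). Then for every t, θ*_t = 0 implies θ̂_t = 0, i.e., supp(θ̂) = supp(θ*). -/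
theorem sparsistency_smooth (T : ℕ) (θh θs : ℕ → ℝ) (q D γ : ℝ)
    (hq : 1 ≤ q) (hD : 0 ≤ D) (hγ0 : 0 < γ) (hγ1 : γ < 1 / (1 + D))
    (hsupp : ∀ t ≤ T, θs t ≠ 0 → θh t ≠ 0)
    (hopt : (1 - γ) * ∑ t ∈ Finset.range (T + 1), (if θh t ≠ 0 then (1:ℝ) else 0)
        + γ * ∑ t ∈ Finset.Icc 1 T, |θh t - θh (t - 1)| ^ q
      ≤ (1 - γ) * ∑ t ∈ Finset.range (T + 1), (if θs t ≠ 0 then (1:ℝ) else 0)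
        + γ * ∑ t ∈ Finset.Icc 1 T, |θs t - θs (t - 1)| ^ q)
    (hsm : ∑ t ∈ Finset.Icc 1 T, |θs t - θs (t - 1)| ^ q ≤ D) :
    ∀ t ≤ T, (θs t = 0 → θh t = 0) := by
  intro t0 ht0 hs0
  by_contra hh0
  have h1D : (0:ℝ) < 1 + D := by linarith
  have hγ1' : γ * (1 + D) < 1 := by
    rw [lt_div_iff₀ h1D] at hγ1; linarith
  have h1γ : 0 < 1 - γ := by nlinarith
  set Nh := ∑ t ∈ Finset.range (T + 1), (if θh t ≠ 0 then (1:ℝ) else 0) with hNh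
  set Ns := ∑ t ∈ Finset.range (T + 1), (if θs t ≠ 0 then (1:ℝ) else 0) with hNs
  have hSh : 0 ≤ ∑ t ∈ Finset.Icc 1 T, |θh t - θh (t - 1)| ^ q :=
    Finset.sum_nonneg fun t _ => Real.rpow_nonneg (abs_nonneg _) q
  -- Nh ≥ Ns + 1
  have key : Ns + 1 ≤ Nh := by
    have hdiff : (1:ℝ) ≤ ∑ t ∈ Finset.range (T + 1),
        ((if θh t ≠ 0 then (1:ℝ) else 0) - (if θs t ≠ 0 then (1:ℝ) else 0)) := by
      have := Finset.single_le_sum (f := fun t =>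
          (if θh t ≠ 0 then (1:ℝ) else 0) - (if θs t ≠ 0 then (1:ℝ) else 0))
        (fun t ht => ?_) (Finset.mem_range.mpr (Nat.lt_succ_of_le ht0))
      · simpa [hh0, hs0] using this
      · by_cases hs : θs t ≠ 0
        · have := hsupp t (Nat.lt_succ_iff.mp (Finset.mem_range.mp ht)) hs
          simp [hs, this]
        · simp [hs]
          positivity
    rw [Finset.sum_sub_distrib] at hdiff
    simp only [hNh, hNs]
    linarith
  nlinarith [hopt, hsm, hSh, key]
end

section
/- Let μ*, μ, μ' be functions on a finite index set with μ*(φ) ≥ μ_min > 0 for all φ, and suppose ‖μ − μ*‖_∞ ≤ μ_min/2 and ‖μ' − μ*‖_∞ ≤ μ_min/2. Then for any indices i, j, k, l, |log(μ_{ijkl}/(μ_{ik}μ_{jl})) − log(μ'_{ijkl}/(μ'_{ik}μ'_{jl}))| ≤ (6/μ_min) · ‖μ − μ'‖_∞. -/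
private lemma log_lip {m x y : ℝ} (hm : 0 < m) (hx : m ≤ x) (hy : m ≤ y) :
    |Real.log x - Real.log y| ≤ |x - y| / m := by
  wlog h : y ≤ x generalizing x y
  · rw [abs_sub_comm, abs_sub_comm x y]; exact this hy hx (le_of_not_ge h)
  have hy0 : 0 < y := lt_of_lt_of_le hm hy
  have hx0 : 0 < x := lt_of_lt_of_le hm hx
  rw [abs_of_nonneg (sub_nonneg.2 (Real.log_le_log hy0 h)),
    abs_of_nonneg (sub_nonneg.2 h)]
  rw [← Real.log_div (ne_of_gt hx0) (ne_of_gt hy0)]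
  have h1 : Real.log (x / y) ≤ x / y - 1 :=
    Real.log_le_sub_one_of_pos (div_pos hx0 hy0)
  have h2 : x / y - 1 = (x - y) / y := by field_simp
  have h3 : (x - y) / y ≤ (x - y) / m :=
    div_le_div_of_nonneg_left (sub_nonneg.2 h) hm hy
  linarith

theorem trw_backward_mapping_lipschitz {ι κ : Type*}
    (μn μn' μsn : ι → κ → ℝ) (μe μe' μse : ι → ι → κ → κ → ℝ)
    (μmin ε : ℝ) (hμmin : 0 < μmin) (hε : 0 ≤ ε)
    (hsn : ∀ i k, μmin ≤ μsn i k)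
    (hse : ∀ i j k l, μmin ≤ μse i j k l)
    (hn : ∀ i k, |μn i k - μsn i k| ≤ μmin / 2)
    (hn' : ∀ i k, |μn' i k - μsn i k| ≤ μmin / 2)
    (he : ∀ i j k l, |μe i j k l - μse i j k l| ≤ μmin / 2)
    (he' : ∀ i j k l, |μe' i j k l - μse i j k l| ≤ μmin / 2)
    (hdn : ∀ i k, |μn i k - μn' i k| ≤ ε)
    (hde : ∀ i j k l, |μe i j k l - μe' i j k l| ≤ ε) :
    ∀ i j k l,
      |Real.log (μe i j k l / (μn i k * μn j l))
        - Real.log (μe' i j k l / (μn' i k * μn' j l))| ≤ (6 / μmin) * ε := by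
  intro i j k l
  have hm2 : 0 < μmin / 2 := by linarith
  -- lower bounds of μmin/2 for all entries
  have lb : ∀ (a s : ℝ), μmin ≤ s → |a - s| ≤ μmin / 2 → μmin / 2 ≤ a := by
    intro a s hs hab
    have := abs_le.1 hab
    linarith [this.1]
  have h1 : μmin / 2 ≤ μn i k := lb _ _ (hsn i k) (hn i k)
  have h2 : μmin / 2 ≤ μn j l := lb _ _ (hsn j l) (hn j l)
  have h3 : μmin / 2 ≤ μn' i k := lb _ _ (hsn i k) (hn' i k)
  have h4 : μmin / 2 ≤ μn' j l := lb _ _ (hsn j l) (hn' j l)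
  have h5 : μmin / 2 ≤ μe i j k l := lb _ _ (hse i j k l) (he i j k l)
  have h6 : μmin / 2 ≤ μe' i j k l := lb _ _ (hse i j k l) (he' i j k l)
  have p1 : 0 < μn i k := lt_of_lt_of_le hm2 h1
  have p2 : 0 < μn j l := lt_of_lt_of_le hm2 h2
  have p3 : 0 < μn' i k := lt_of_lt_of_le hm2 h3
  have p4 : 0 < μn' j l := lt_of_lt_of_le hm2 h4
  have p5 : 0 < μe i j k l := lt_of_lt_of_le hm2 h5
  have p6 : 0 < μe' i j k l := lt_of_lt_of_le hm2 h6
  rw [Real.log_div (ne_of_gt p5) (ne_of_gt (mul_pos p1 p2)),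
      Real.log_div (ne_of_gt p6) (ne_of_gt (mul_pos p3 p4)),
      Real.log_mul (ne_of_gt p1) (ne_of_gt p2),
      Real.log_mul (ne_of_gt p3) (ne_of_gt p4)]
  have L1 := log_lip hm2 h5 h6
  have L2 := log_lip hm2 h1 h3
  have L3 := log_lip hm2 h2 h4
  have de := hde i j k l
  have dn1 := hdn i k
  have dn2 := hdn j l
  have bnd : ∀ d : ℝ, |d| ≤ ε → |d| / (μmin / 2) ≤ 2 / μmin * ε := by
    intro d hd
    have h1 : |d| / (μmin / 2) ≤ ε / (μmin / 2) := by gcongr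
    have h2 : ε / (μmin / 2) = 2 / μmin * ε := by
      field_simp
    linarith
  have B1 := le_trans L1 (bnd _ de)
  have B2 := le_trans L2 (bnd _ dn1)
  have B3 := le_trans L3 (bnd _ dn2)
  have key : |Real.log (μe i j k l) - (Real.log (μn i k) + Real.log (μn j l))
      - (Real.log (μe' i j k l) - (Real.log (μn' i k) + Real.log (μn' j l)))|
      ≤ |Real.log (μe i j k l) - Real.log (μe' i j k l)|
        + |Real.log (μn i k) - Real.log (μn' i k)|
        + |Real.log (μn j l) - Real.log (μn' j l)| := by
    have := abs_sub (Real.log (μe i j k l) - Real.log (μe' i j k l)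
      - (Real.log (μn i k) - Real.log (μn' i k))) (Real.log (μn j l) - Real.log (μn' j l))
    calc _ = |Real.log (μe i j k l) - Real.log (μe' i j k l)
        - (Real.log (μn i k) - Real.log (μn' i k))
        - (Real.log (μn j l) - Real.log (μn' j l))| := by ring_nf
      _ ≤ _ := by
        apply (abs_sub _ _).trans
        gcongr
        exact abs_sub _ _
  have final := key.trans (by linarith : _ ≤ 2 / μmin * ε + 2 / μmin * ε + 2 / μmin * ε)
  calc _ ≤ _ := final
    _ = 6 / μmin * ε := by ring
end

section
/- Let intervals [ℓ_t, u_t] ⊆ ℝ be given for t = 0,…,T, and suppose indices 0 = τ₀ < τ₁ < ⋯ < τ_m = T are such that for each i = 0,…,m−1, the intervals [ℓ_t, u_t] for τ_i ≤ t ≤ τ_{i+1} have pairwise empty intersection as a family (i.e., max_{τ_i ≤ t ≤ τ_{i+1}} ℓ_t > min_{τ_i ≤ t ≤ τ_{i+1}} u_t), while within each half-open block [τ_i, τ_{i+1}) the intervals have a common point. Then the minimum of Σ_{t=1}^T 𝟙[θ_t ≠ θ_{t−1}] over all sequences with ℓ_t ≤ θ_t ≤ u_t equals m. -/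
theorem greedy_breakpoints_optimal (T m : ℕ) (ℓ u : ℕ → ℝ) (τ : ℕ → ℕ)
    (hτ0 : τ 0 = 0) (hτm : τ m = T) (hmono : ∀ i < m, τ i < τ (i + 1))
    (hfeas : ∀ t ≤ T, ℓ t ≤ u t)
    (hempty : ∀ i < m, ∃ t1 ∈ Finset.Icc (τ i) (τ (i + 1)),
      ∃ t2 ∈ Finset.Icc (τ i) (τ (i + 1)), u t2 < ℓ t1)
    (hcommon : ∀ i < m, ∃ x : ℝ, ∀ t, τ i ≤ t → t < τ (i + 1) → ℓ t ≤ x ∧ x ≤ u t) :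
    IsLeast {n : ℕ | ∃ θ : ℕ → ℝ,
        (∀ t ≤ T, ℓ t ≤ θ t ∧ θ t ≤ u t) ∧
        n = ∑ t ∈ Finset.Icc 1 T, (if θ t ≠ θ (t - 1) then 1 else 0)} m := by
  classical
  have hsm : ∀ i j, i < j → j ≤ m → τ i < τ j := by
    intro i j hij hjm
    induction j with
    | zero => omega
    | succ k ih =>
      rcases Nat.lt_succ_iff_lt_or_eq.mp hij with h | h
      · exact lt_trans (ih h (by omega)) (hmono k (by omega))
      · subst h; exact hmono i (by omega)
  have hle : ∀ i j, i ≤ j → j ≤ m → τ i ≤ τ j := by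
    intro i j hij hjm
    rcases eq_or_lt_of_le hij with h | h
    · subst h; exact le_rfl
    · exact le_of_lt (hsm _ _ h hjm)
  have hτT : ∀ j ≤ m, τ j ≤ T := by
    intro j hj; rw [← hτm]; exact hle j m hj le_rfl
  constructor
  · -- membership : construct θ with exactly m breakpoints
    choose xf hxf using hcommon
    set x : ℕ → ℝ := fun i => if h : i < m then xf i h else 0 with hxdef
    have hx : ∀ i (h : i < m), ∀ t, τ i ≤ t → t < τ (i + 1) → ℓ t ≤ x i ∧ x i ≤ u t := by
      intro i h t h1 h2
      simp only [hxdef, dif_pos h]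
      exact hxf i h t h1 h2
    have hA : ∀ i (hi : i < m), ∀ y, ℓ (τ (i+1)) ≤ y → y ≤ u (τ (i+1)) → x i ≠ y := by
      intro i hi y hy1 hy2 hxy
      obtain ⟨t1, ht1, t2, ht2, hul⟩ := hempty i hi
      simp only [Finset.mem_Icc] at ht1 ht2
      have h1 : ℓ t1 ≤ y := by
        rcases eq_or_lt_of_le ht1.2 with h | h
        · rw [h]; exact hy1
        · rw [← hxy]; exact (hx i hi t1 ht1.1 h).1
      have h2 : y ≤ u t2 := by
        rcases eq_or_lt_of_le ht2.2 with h | h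
        · rw [h]; exact hy2
        · rw [← hxy]; exact (hx i hi t2 ht2.1 h).2
      linarith
    set blk : ℕ → ℕ := fun t => Nat.findGreatest (fun i => τ i ≤ t) m with hblkdef
    have hblk : ∀ t < T, τ (blk t) ≤ t ∧ blk t < m ∧ t < τ (blk t + 1) := by
      intro t ht
      have h0 : τ 0 ≤ t := by rw [hτ0]; exact Nat.zero_le t
      have hspec : τ (blk t) ≤ t :=
        Nat.findGreatest_spec (P := fun i => τ i ≤ t) (Nat.zero_le m) h0
      have hlem : blk t ≤ m := Nat.findGreatest_le (P := fun i => τ i ≤ t) m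
      have hlt : blk t < m := by
        rcases eq_or_lt_of_le hlem with h | h
        · exfalso
          have : τ m ≤ t := by rw [← h]; exact hspec
          rw [hτm] at this; omega
        · exact h
      have hng : ¬ τ (blk t + 1) ≤ t :=
        Nat.findGreatest_is_greatest (P := fun i => τ i ≤ t)
          (Nat.lt_succ_self _) (by omega)
      exact ⟨hspec, hlt, by omega⟩
    have hblku : ∀ t, ∀ j < m, τ j ≤ t → t < τ (j+1) → blk t = j := by
      intro t j hj h1 h2
      have ht : t < T := lt_of_lt_of_le h2 (hτT (j+1) hj)
      obtain ⟨hb1, hb2, hb3⟩ := hblk t ht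
      by_contra hne
      rcases lt_or_gt_of_ne hne with h | h
      · have : τ (blk t + 1) ≤ τ j := hle _ _ (by omega) (by omega); omega
      · have : τ (j+1) ≤ τ (blk t) := hle _ _ (by omega) (by omega); omega
    refine ⟨fun t => if t < T then x (blk t) else ℓ t, ?_, ?_⟩
    · intro t ht
      by_cases h : t < T
      · simp only [if_pos h]
        obtain ⟨hb1, hb2, hb3⟩ := hblk t h
        exact hx _ hb2 t hb1 hb3
      · simp only [if_neg h]
        exact ⟨le_rfl, hfeas t ht⟩
    · set θ : ℕ → ℝ := fun t => if t < T then x (blk t) else ℓ t with hθdef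
      have hcard : ∑ t ∈ Finset.Icc 1 T, (if θ t ≠ θ (t-1) then 1 else 0)
          = ((Finset.Icc 1 T).filter (fun t => θ t ≠ θ (t-1))).card :=
        (Finset.card_filter _ _).symm
      have hset : (Finset.Icc 1 T).filter (fun t => θ t ≠ θ (t-1))
          = (Finset.Icc 1 m).image τ := by
        ext t
        simp only [Finset.mem_filter, Finset.mem_image, Finset.mem_Icc]
        constructor
        · rintro ⟨⟨h1t, htT⟩, hne⟩
          by_cases hT : t = T
          · have hm0 : m ≠ 0 := by
              intro h; rw [h, hτ0] at hτm; omega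
            exact ⟨m, ⟨by omega, le_rfl⟩, by rw [hτm, hT]⟩
          · have htT' : t < T := by omega
            obtain ⟨hb1, hb2, hb3⟩ := hblk t htT'
            by_cases hteq : t = τ (blk t)
            · have hbge : 1 ≤ blk t := by
                by_contra hb0
                have : blk t = 0 := by omega
                rw [this, hτ0] at hteq; omega
              exact ⟨blk t, ⟨hbge, by omega⟩, hteq.symm⟩
            · exfalso
              have h1 : τ (blk t) ≤ t - 1 := by omega
              have h2 : t - 1 < τ (blk t + 1) := by omega
              have hprev : blk (t-1) = blk t := hblku (t-1) (blk t) hb2 h1 h2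
              have ht1T : t - 1 < T := by omega
              apply hne
              simp only [hθdef, if_pos htT', if_pos ht1T, hprev]
        · rintro ⟨i, ⟨hi1, him⟩, hti⟩
          subst hti
          have h1 : 0 < τ i := by
            have := hsm 0 i hi1 him; omega
          have h2 : τ i ≤ T := hτT i him
          have hi1m : i - 1 < m := by omega
          have hprevlt : τ i - 1 < T := by omega
          have hipred : i - 1 + 1 = i := by omega
          have hprev : blk (τ i - 1) = i - 1 := by
            apply hblku (τ i - 1) (i-1) hi1m
            · have : τ (i-1) < τ i := hsm (i-1) i (by omega) him
              omega
            · rw [hipred]; omega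
          refine ⟨⟨by omega, h2⟩, ?_⟩
          have hθprev : θ (τ i - 1) = x (i-1) := by
            simp only [hθdef, if_pos hprevlt, hprev]
          by_cases hiM : i = m
          · have hTi : ¬ τ i < T := by rw [hiM, hτm]; omega
            have hθt : θ (τ i) = ℓ T := by
              simp only [hθdef, if_neg hTi]
              rw [hiM, hτm]
            rw [hθt, hθprev]
            have := hA (i-1) hi1m (ℓ T) (by rw [hipred, hiM, hτm]) (by rw [hipred, hiM, hτm]; exact hfeas T le_rfl)
            exact fun h => this h.symm
          · have hiM' : i < m := by omega
            have hTi : τ i < T := by rw [← hτm]; exact hsm i m hiM' le_rfl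
            have hbt : blk (τ i) = i := hblku (τ i) i hiM' le_rfl (hmono i hiM')
            have hθt : θ (τ i) = x i := by
              simp only [hθdef, if_pos hTi, hbt]
            rw [hθt, hθprev]
            have hxi := hx i hiM' (τ i) le_rfl (hmono i hiM')
            have := hA (i-1) hi1m (x i) (by rw [hipred]; exact hxi.1) (by rw [hipred]; exact hxi.2)
            exact fun h => this h.symm
      have hinj : Set.InjOn τ (Finset.Icc 1 m) := by
        intro a ha b hb hab
        simp only [Finset.coe_Icc, Set.mem_Icc] at ha hb
        by_contra hne
        rcases lt_or_gt_of_ne hne with h | h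
        · have := hsm a b h hb.2; omega
        · have := hsm b a h ha.2; omega
      rw [hcard, hset, Finset.card_image_of_injOn hinj, Nat.card_Icc]
      omega
  · -- lower bound
    rintro n ⟨θ, hθ, rfl⟩
    have hbp : ∀ i < m, ∃ t, (τ i < t ∧ t ≤ τ (i+1)) ∧ θ t ≠ θ (t-1) := by
      intro i hi
      by_contra hno
      push_neg at hno
      have hconst : ∀ d, τ i + d ≤ τ (i+1) → θ (τ i + d) = θ (τ i) := by
        intro d
        induction d with
        | zero => intro _; rfl
        | succ k ih =>
          intro hd
          have h1 := hno (τ i + (k+1)) ⟨by omega, hd⟩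
          have h2 : τ i + (k+1) - 1 = τ i + k := by omega
          rw [h2] at h1
          rw [h1, ih (by omega)]
      obtain ⟨t1, ht1, t2, ht2, hul⟩ := hempty i hi
      simp only [Finset.mem_Icc] at ht1 ht2
      have hT1 : t1 ≤ T := le_trans ht1.2 (hτT _ hi)
      have hT2 : t2 ≤ T := le_trans ht2.2 (hτT _ hi)
      have hv1 : θ t1 = θ (τ i) := by
        have := hconst (t1 - τ i) (by omega)
        rwa [show τ i + (t1 - τ i) = t1 by omega] at this
      have hv2 : θ t2 = θ (τ i) := by
        have := hconst (t2 - τ i) (by omega)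
        rwa [show τ i + (t2 - τ i) = t2 by omega] at this
      have hl1 := (hθ t1 hT1).1
      have hu2 := (hθ t2 hT2).2
      rw [hv1] at hl1
      rw [hv2] at hu2
      linarith
    choose f hf using hbp
    set g : ℕ → ℕ := fun i => if h : i < m then f i h else 0 with hgdef
    have hcard : m ≤ ((Finset.Icc 1 T).filter (fun t => θ t ≠ θ (t-1))).card := by
      have hmap : ∀ i ∈ Finset.range m,
          g i ∈ (Finset.Icc 1 T).filter (fun t => θ t ≠ θ (t-1)) := by
        intro i hi
        simp only [Finset.mem_range] at hi
        have hg : g i = f i hi := by simp only [hgdef, dif_pos hi]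
        obtain ⟨⟨ha, hb⟩, hc⟩ := hf i hi
        simp only [Finset.mem_filter, Finset.mem_Icc]
        rw [hg]
        exact ⟨⟨by omega, le_trans hb (hτT _ hi)⟩, hc⟩
      have hinj : Set.InjOn g (Finset.range m) := by
        intro a ha b hb hab
        simp only [Finset.coe_range, Set.mem_Iio] at ha hb
        have hga : g a = f a ha := by simp only [hgdef, dif_pos ha]
        have hgb : g b = f b hb := by simp only [hgdef, dif_pos hb]
        by_contra hne
        obtain ⟨⟨ha1, ha2⟩, _⟩ := hf a ha
        obtain ⟨⟨hb1, hb2⟩, _⟩ := hf b hb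
        rcases lt_or_gt_of_ne hne with h | h
        · have : τ (a+1) ≤ τ b := hle _ _ (by omega) (by omega)
          rw [hga, hgb] at hab; omega
        · have : τ (b+1) ≤ τ a := hle _ _ (by omega) (by omega)
          rw [hga, hgb] at hab; omega
      have := Finset.card_le_card_of_injOn g hmap hinj
      simpa using this
    calc m ≤ ((Finset.Icc 1 T).filter (fun t => θ t ≠ θ (t-1))).card := hcard
      _ = ∑ t ∈ Finset.Icc 1 T, (if θ t ≠ θ (t-1) then 1 else 0) := Finset.card_filter _ _
end
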